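/- Suppose a_i = b_i ∘ h_i where h₁,…,h_d are automorphisms of M that commute with each other and with all the operators b₁,…,b_d, and the families (a_i), (b_i) each consist of pairwise commuting endomorphisms. Then the Koszul complexes Kos(M; a₁,…,a_d) and Kos(M; b₁,…,b_d) (formed from commuting endomorphisms) are isomorphic as cochain complexes. -/

import Mathlib

noncomputable section

variable {R : Type*} [CommRing R] {M : Type*} [AddCommGroup M] [Module R M]

/-- The degree-`n` term of the Koszul complex on `d` (commuting) endomorphisms of `M`:
functions from `n`-element subsets of `Fin d` to `M`. -/
abbrev KosT (d : ℕ) (M : Type*) (n : ℕ) : Type _ :=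
  {s : Finset (Fin d) // s.card = n} → M

/-- The Koszul differential associated to a family `c : Fin d → End M` of (commuting)
endomorphisms: `(dω)(s) = Σ_{i ∈ s} (-1)^{#{j ∈ s : j < i}} · c i (ω (s \ {i}))`. -/
noncomputable def kosD {d : ℕ} (c : Fin d → Module.End R M) (n : ℕ) :
    KosT d M n →ₗ[R] KosT d M (n + 1) where
  toFun ω s := ∑ i ∈ s.1.attach,
    ((-1 : ℤ) ^ ((s.1.filter (fun j => j < i.1)).card)) •
      c i.1 (ω ⟨s.1.erase i.1, by simp [Finset.card_erase_of_mem i.2, s.2]⟩)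
  map_add' ω ω' := by
    funext s
    simp [Finset.sum_add_distrib, smul_add]
  map_smul' r ω := by
    funext s
    simp [Finset.smul_sum, smul_comm r]

/-- **Koszul complexes twisted by commuting automorphisms.**
Let `R` be a commutative ring, `M` an `R`-module, and `a_i`, `b_i`, `h_i` (`1 ≤ i ≤ d`)
endomorphisms of `M` with `a_i = b_i ∘ h_i`, where the `h_i` are automorphisms commuting with
each other and with all the `b_j`, and the families `(a_i)` and `(b_i)` each consist of
pairwise commuting endomorphisms.  Then the Koszul complexes `Kos(M; a₁, …, a_d)` and
`Kos(M; b₁, …, b_d)` are isomorphic as cochain complexes. -/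
theorem stmt_16 {d : ℕ} (a b h : Fin d → Module.End R M)
    (hab : ∀ i, a i = b i * h i)
    (hunit : ∀ i, IsUnit (h i))
    (hhh : ∀ i j, Commute (h i) (h j))
    (hhb : ∀ i j, Commute (h i) (b j))
    (haa : ∀ i j, Commute (a i) (a j))
    (hbb : ∀ i j, Commute (b i) (b j)) :
    ∃ e : ∀ n : ℕ, KosT d M n ≃ₗ[R] KosT d M n,
      ∀ (n : ℕ) (ω : KosT d M n),
        kosD b n (e n ω) = e (n + 1) (kosD a n ω) := by
  classical
  have hcoe : ∀ i, ((hunit i).unit : Module.End R M) = h i := fun i => (hunit i).unit_spec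
  set g : Fin d → Module.End R M := fun i => ↑((hunit i).unit⁻¹) with hgdef
  have hgh : ∀ i, g i * h i = 1 := fun i => by
    rw [hgdef, ← hcoe i, ← Units.val_mul, inv_mul_cancel, Units.val_one]
  have hhg : ∀ i, h i * g i = 1 := fun i => by
    rw [hgdef, ← hcoe i, ← Units.val_mul, mul_inv_cancel, Units.val_one]
  have hgg : ∀ i j, Commute (g i) (g j) := fun i j => by
    have := hhh i j
    rw [← hcoe i, ← hcoe j] at this
    exact this.units_inv_left.units_inv_right
  have hgb : ∀ i j, Commute (g i) (b j) := fun i j => by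
    have := hhb i j
    rw [← hcoe i] at this
    exact this.units_inv_left
  have hgh' : ∀ i j, Commute (g i) (h j) := fun i j => by
    have := hhh i j
    rw [← hcoe i] at this
    exact this.units_inv_left
  set P : Finset (Fin d) → Module.End R M :=
    fun s => s.noncommProd g (fun i _ j _ _ => hgg i j) with hPdef
  set Q : Finset (Fin d) → Module.End R M :=
    fun s => s.noncommProd h (fun i _ j _ _ => hhh i j) with hQdef
  have hPb : ∀ (s : Finset (Fin d)) (j : Fin d), Commute (b j) (P s) := fun s j =>
    Finset.noncommProd_commute _ _ _ _ (fun i _ => (hgb i j).symm)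
  have hPh : ∀ (s : Finset (Fin d)) (j : Fin d), Commute (h j) (P s) := fun s j =>
    Finset.noncommProd_commute _ _ _ _ (fun i _ => (hgh' i j).symm)
  have hQP : ∀ s : Finset (Fin d), Q s * P s = 1 := by
    intro s
    induction s using Finset.induction_on with
    | empty => exact (congrArg₂ (· * ·) (Finset.noncommProd_empty _ _) (Finset.noncommProd_empty _ _)).trans (mul_one 1)
    | @insert i s his ih =>
      simp only [hPdef, hQdef] at ih ⊢
      erw [Finset.noncommProd_insert_of_notMem _ _ _ _ his,
        Finset.noncommProd_insert_of_notMem _ _ _ _ his]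
      have c : Commute (g i) (Finset.noncommProd s h
          (fun j _ k _ _ => hhh j k)) :=
        Finset.noncommProd_commute _ _ _ _ (fun j _ => hgh' i j)
      rw [mul_assoc (h i), ← mul_assoc (Finset.noncommProd s h _) (g i),
        ← c.eq, mul_assoc (g i), ih, mul_one, hhg]
  have hPQ : ∀ s : Finset (Fin d), P s * Q s = 1 := by
    intro s
    have c : Commute (Q s) (P s) := Finset.noncommProd_commute _ _ _ _
      (fun j _ => (Finset.noncommProd_commute _ _ _ _ (fun k _ => hgh' j k)).symm)
    rw [← c.eq, hQP]
  have key : ∀ (s : Finset (Fin d)) (i : Fin d), i ∈ s → P s * a i = b i * P (s.erase i) := by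
    intro s i hi
    have h1 : P (s.erase i) * g i = P s := by
      rw [hPdef]
      exact Finset.noncommProd_erase_mul s hi g _
    rw [← h1, hab i, mul_assoc, ← mul_assoc (g i), (hgb i i).eq, mul_assoc (b i), hgh,
      mul_one, ← (hPb (s.erase i) i).eq]
  refine ⟨fun n =>
    { toFun := fun ω s => P s.1 (ω s)
      invFun := fun ω s => Q s.1 (ω s)
      map_add' := fun ω ω' => by funext s; simp
      map_smul' := fun r ω => by funext s; simp
      left_inv := fun ω => by
        funext s
        show Q s.1 (P s.1 (ω s)) = ω s
        rw [← Module.End.mul_apply, hQP, Module.End.one_apply]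
      right_inv := fun ω => by
        funext s
        show P s.1 (Q s.1 (ω s)) = ω s
        rw [← Module.End.mul_apply, hPQ, Module.End.one_apply] }, ?_⟩
  intro n ω
  funext s
  show (kosD b n fun t => P t.1 (ω t)) s = P s.1 ((kosD a n ω) s)
  simp only [kosD, LinearMap.coe_mk, AddHom.coe_mk]
  rw [map_sum]
  refine Finset.sum_congr rfl fun i _ => ?_
  rw [map_zsmul]
  congr 1
  rw [← Module.End.mul_apply, ← Module.End.mul_apply, key s.1 i.1 i.2]
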